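/- arXiv:2406.11089 — 3 statements merged into one kernel-verified Lean document; each statement's English description precedes it below -/
import Mathlib

section
/- Weighted energy identity underlying Agmon's method: let d ≥ 1, let f : ℝ^d → ℝ be a C² function with compact support, let φ : ℝ^d → ℝ be C¹, and let V : ℝ^d → ℝ be continuous. Then ∫_{ℝ^d} e^{2φ(x)} f(x) ( −(1/2)Δf(x) + V(x) f(x) ) dx = (1/2)∫_{ℝ^d} ‖∇(e^{φ} f)(x)‖² dx + ∫_{ℝ^d} e^{2φ(x)} ( V(x) − (1/2)‖∇φ(x)‖² ) f(x)² dx. -/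
/-!
Put `g = e^φ f` and `Uᵢ = e^{2φ} f ∂ᵢf`. The product rule gives, pointwise,
`∂ᵢUᵢ = (∂ᵢg)² - e^{2φ} (∂ᵢφ)² f² + e^{2φ} f ∂ᵢ²f`, so the integrand on the left equals
`½‖∇g‖² + e^{2φ} (V - ½‖∇φ‖²) f² - ½ div U`. The field `U` is `C¹` with compact support, so
`div U` integrates to zero: integrating by parts against the constant `1` kills each `∂ᵢUᵢ`.
-/

open MeasureTheory Real

noncomputable section

abbrev Rd (d : ℕ) : Type := EuclideanSpace ℝ (Fin d)

/-- the `i`-th partial derivative of a real-valued function on `ℝ^d` -/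
def pd {d : ℕ} (i : Fin d) (g : Rd d → ℝ) (x : Rd d) : ℝ :=
  fderiv ℝ g x (EuclideanSpace.single i 1)

section IntegralFDeriv

variable {E F : Type*} [NormedAddCommGroup E] [NormedSpace ℝ E] [MeasurableSpace E]
  [NormedAddCommGroup F] [NormedSpace ℝ F] {μ : Measure E} {U : E → F}

theorem integrable_fderiv_apply [IsFiniteMeasureOnCompacts μ] [OpensMeasurableSpace E]
    (hU : ContDiff ℝ 1 U) (hs : HasCompactSupport U) (v : E) :
    Integrable (fun x => fderiv ℝ U x v) μ :=
  ((hU.continuous_fderiv one_ne_zero).clm_apply continuous_const).integrable_of_hasCompactSupport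
    (hs.fderiv_apply ℝ v)

theorem integral_fderiv_apply_eq_zero [FiniteDimensional ℝ E] [BorelSpace E]
    [μ.IsAddHaarMeasure] (hU : ContDiff ℝ 1 U) (hs : HasCompactSupport U) (v : E) :
    ∫ x, fderiv ℝ U x v ∂μ = 0 := by
  have h := integral_smul_fderiv_eq_neg_fderiv_smul_of_integrable (μ := μ) (v := v)
    (f := fun _ => (1 : ℝ)) (g := U) (by simp) (by simpa using integrable_fderiv_apply hU hs v)
    (by simpa using hU.continuous.integrable_of_hasCompactSupport hs)
    (fun _ _ => differentiableAt_const _) (fun x _ => hU.differentiable one_ne_zero x)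
  simpa using h

end IntegralFDeriv

section Gradient

variable {E : Type*} [NormedAddCommGroup E] [InnerProductSpace ℝ E] [CompleteSpace E]
  {g : E → ℝ}

theorem ContDiff.continuous_gradient (hg : ContDiff ℝ 1 g) : Continuous (gradient g) :=
  (InnerProductSpace.toDual ℝ E).symm.continuous.comp (hg.continuous_fderiv one_ne_zero)

theorem HasCompactSupport.gradient (hs : HasCompactSupport g) : HasCompactSupport (gradient g) :=
  (hs.fderiv ℝ).comp_left (map_zero _)

theorem integrable_norm_gradient_sq [MeasurableSpace E] [OpensMeasurableSpace E] {μ : Measure E}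
    [IsFiniteMeasureOnCompacts μ] (hg : ContDiff ℝ 1 g) (hs : HasCompactSupport g) :
    Integrable (fun x => ‖gradient g x‖ ^ 2) μ := by
  have hs' : HasCompactSupport fun x => ‖gradient g x‖ ^ 2 :=
    hs.gradient.comp_left (g := fun v : E => ‖v‖ ^ 2) (by simp)
  exact (hg.continuous_gradient.norm.pow 2).integrable_of_hasCompactSupport hs'

end Gradient

section PartialDerivatives

variable {d : ℕ} {i : Fin d} {g h : Rd d → ℝ} {x : Rd d}

theorem gradient_apply_eq_pd (g : Rd d → ℝ) (x : Rd d) (i : Fin d) :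
    gradient g x i = pd i g x := by
  have h := inner_gradient_left (𝕜 := ℝ) (f := g) (x := x) (y := EuclideanSpace.single i 1)
  rwa [EuclideanSpace.inner_single_right, one_mul, conj_trivial] at h

theorem norm_gradient_sq_eq_sum_pd_sq (g : Rd d → ℝ) (x : Rd d) :
    ‖gradient g x‖ ^ 2 = ∑ i, pd i g x ^ 2 := by
  simp [EuclideanSpace.norm_eq, Real.sq_sqrt (Finset.sum_nonneg fun i _ => sq_nonneg _),
    gradient_apply_eq_pd]

theorem contDiff_pd {n : WithTop ℕ∞} (hg : ContDiff ℝ (n + 1) g) (i : Fin d) :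
    ContDiff ℝ n (pd i g) :=
  (hg.fderiv_right le_rfl).clm_apply contDiff_const

theorem pd_mul (hg : DifferentiableAt ℝ g x) (hh : DifferentiableAt ℝ h x) :
    pd i (fun y => g y * h y) x = pd i g x * h x + g x * pd i h x := by
  simp only [pd, fderiv_fun_mul hg hh, add_apply, smul_apply, smul_eq_mul]
  ring

theorem pd_exp (hg : DifferentiableAt ℝ g x) :
    pd i (fun y => exp (g y)) x = exp (g x) * pd i g x := by
  simp [pd, fderiv_exp hg]

theorem pd_const_mul (hg : DifferentiableAt ℝ g x) (c : ℝ) :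
    pd i (fun y => c * g y) x = c * pd i g x := by
  simp [pd, fderiv_const_mul hg]

theorem integrable_sum_pd {U : Fin d → Rd d → ℝ} (hU : ∀ i, ContDiff ℝ 1 (U i))
    (hs : ∀ i, HasCompactSupport (U i)) :
    Integrable fun x => ∑ i, pd i (U i) x :=
  integrable_finsetSum _ fun i _ => integrable_fderiv_apply (hU i) (hs i) _

theorem integral_sum_pd_eq_zero {U : Fin d → Rd d → ℝ} (hU : ∀ i, ContDiff ℝ 1 (U i))
    (hs : ∀ i, HasCompactSupport (U i)) :
    ∫ x, ∑ i, pd i (U i) x = 0 := by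
  rw [integral_finsetSum (f := fun i => pd i (U i)) _
    fun i _ => integrable_fderiv_apply (hU i) (hs i) _]
  exact Finset.sum_eq_zero fun i _ => integral_fderiv_apply_eq_zero (hU i) (hs i) _

end PartialDerivatives

section WeightedFlux

variable {d : ℕ} {φ f : Rd d → ℝ} {x : Rd d}

def weightedFlux (φ f : Rd d → ℝ) (i : Fin d) (x : Rd d) : ℝ :=
  exp (2 * φ x) * f x * pd i f x

theorem contDiff_weightedFlux (hφ : ContDiff ℝ 1 φ) (hf : ContDiff ℝ 2 f) (i : Fin d) :
    ContDiff ℝ 1 (weightedFlux φ f i) :=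
  ((contDiff_exp.comp (contDiff_const.mul hφ)).mul (hf.of_le one_le_two)).mul
    (contDiff_pd (n := 1) hf i)

theorem HasCompactSupport.weightedFlux (hf : HasCompactSupport f) (φ : Rd d → ℝ) (i : Fin d) :
    HasCompactSupport (weightedFlux φ f i) := by
  unfold _root_.weightedFlux
  exact (hf.mul_left (f := fun x => exp (2 * φ x))).mul_right (f' := pd i f)

theorem pd_weightedFlux {i : Fin d} (hφ : DifferentiableAt ℝ φ x) (hf : DifferentiableAt ℝ f x)
    (hf' : DifferentiableAt ℝ (pd i f) x) :
    pd i (weightedFlux φ f i) x = pd i (fun y => exp (φ y) * f y) x ^ 2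
      - exp (2 * φ x) * pd i φ x ^ 2 * f x ^ 2 + exp (2 * φ x) * f x * pd i (pd i f) x := by
  have hφ₂ : DifferentiableAt ℝ (fun y => 2 * φ y) x := hφ.const_mul 2
  unfold weightedFlux
  rw [pd_mul (g := fun y => exp (2 * φ y) * f y) (hφ₂.exp.mul hf) hf', pd_mul hφ₂.exp hf,
    pd_exp hφ₂, pd_const_mul hφ, pd_mul hφ.exp hf, pd_exp hφ,
    show exp (2 * φ x) = exp (φ x) ^ 2 by rw [sq, ← exp_add, two_mul]]
  ring

theorem weighted_energy_density_eq (v : ℝ) (hφ : DifferentiableAt ℝ φ x)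
    (hf : DifferentiableAt ℝ f x) (hf' : ∀ i, DifferentiableAt ℝ (pd i f) x) :
    exp (2 * φ x) * f x * (-(1/2) * (∑ i, pd i (pd i f) x) + v * f x)
      = 1/2 * ‖gradient (fun y => exp (φ y) * f y) x‖ ^ 2
        + exp (2 * φ x) * (v - 1/2 * ‖gradient φ x‖ ^ 2) * f x ^ 2
        - 1/2 * ∑ i, pd i (weightedFlux φ f i) x := by
  rw [Finset.sum_congr rfl fun i _ => pd_weightedFlux hφ hf (hf' i)]
  simp only [norm_gradient_sq_eq_sum_pd_sq, Finset.sum_add_distrib, Finset.sum_sub_distrib,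
    ← Finset.sum_mul, ← Finset.mul_sum]
  ring

end WeightedFlux

theorem weighted_energy_identity_general (d : ℕ)
    (f : Rd d → ℝ) (hf : ContDiff ℝ 2 f) (hsupp : HasCompactSupport f)
    (φ : Rd d → ℝ) (hφ : ContDiff ℝ 1 φ)
    (V : Rd d → ℝ) (hV : Continuous V) :
    ∫ x : Rd d, Real.exp (2 * φ x) * f x * (-(1/2) * (∑ i, pd i (pd i f) x) + V x * f x)
      = (1/2) * (∫ x : Rd d, ‖gradient (fun y => Real.exp (φ y) * f y) x‖ ^ 2)
        + ∫ x : Rd d, Real.exp (2 * φ x) * (V x - (1/2) * ‖gradient φ x‖ ^ 2) * f x ^ 2 := by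
  have hf₁ : ContDiff ℝ 1 f := hf.of_le one_le_two
  have hflux := contDiff_weightedFlux hφ hf
  have hflux_supp := hsupp.weightedFlux φ
  have hkin : Integrable fun x => 1/2 * ‖gradient (fun y => exp (φ y) * f y) x‖ ^ 2 :=
    (integrable_norm_gradient_sq ((contDiff_exp.comp hφ).mul hf₁)
      (hsupp.mul_left (f := fun y => exp (φ y)))).const_mul _
  have hpot : Integrable fun x => exp (2 * φ x) * (V x - 1/2 * ‖gradient φ x‖ ^ 2) * f x ^ 2 := by
    refine Continuous.integrable_of_hasCompactSupport ?_ ?_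
    · exact (((continuous_const.mul hφ.continuous).rexp).mul (hV.sub (continuous_const.mul
        (hφ.continuous_gradient.norm.pow 2)))).mul (hf₁.continuous.pow 2)
    · exact (hsupp.comp_left (g := fun t : ℝ => t ^ 2) (by simp)).mul_left
  calc _ = ∫ x, 1/2 * ‖gradient (fun y => exp (φ y) * f y) x‖ ^ 2
        + exp (2 * φ x) * (V x - 1/2 * ‖gradient φ x‖ ^ 2) * f x ^ 2
        - 1/2 * ∑ i, pd i (weightedFlux φ f i) x :=
      integral_congr_ae <| ae_of_all _ fun x => weighted_energy_density_eq (V x)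
        (hφ.differentiable one_ne_zero x) (hf₁.differentiable one_ne_zero x)
        fun i => (contDiff_pd (n := 1) hf i).differentiable one_ne_zero x
    _ = _ := by
      rw [integral_sub ?_ ((integrable_sum_pd hflux hflux_supp).const_mul _),
        integral_add hkin hpot, integral_const_mul, integral_const_mul,
        integral_sum_pd_eq_zero hflux hflux_supp]
      · ring
      · exact hkin.add hpot

/-- Weighted energy identity underlying Agmon's method:
`∫ e^{2φ} f (−½Δf + Vf) = ½∫ ‖∇(e^φ f)‖² + ∫ e^{2φ}(V − ½‖∇φ‖²) f²`. -/
theorem weighted_energy_identity (d : ℕ) (hd : 1 ≤ d)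
    (f : Rd d → ℝ) (hf : ContDiff ℝ 2 f) (hsupp : HasCompactSupport f)
    (φ : Rd d → ℝ) (hφ : ContDiff ℝ 1 φ)
    (V : Rd d → ℝ) (hV : Continuous V) :
    ∫ x : Rd d, Real.exp (2 * φ x) * f x * (-(1/2) * (∑ i, pd i (pd i f) x) + V x * f x)
      = (1/2) * (∫ x : Rd d, ‖gradient (fun y => Real.exp (φ y) * f y) x‖ ^ 2)
        + ∫ x : Rd d, Real.exp (2 * φ x) * (V x - (1/2) * ‖gradient φ x‖ ^ 2) * f x ^ 2 :=
  weighted_energy_identity_general d f hf hsupp φ hφ V hV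
end
end

section
/- Green's theorem along a straight-line homotopy: let A : ℝ² → ℝ² be a C¹ vector field with β := ∂₁A₂ − ∂₂A₁, let T > 0, and let γ, σ : [0,T] → ℝ² be C¹ paths with the same endpoints, γ(0) = σ(0) and γ(T) = σ(T). Define Γ(s,t) := s·σ(t) + (1−s)·γ(t) for (s,t) ∈ [0,1]×[0,T]. Then ∫₀^T A(σ(t))·σ'(t) dt − ∫₀^T A(γ(t))·γ'(t) dt = ∫₀¹ ∫₀^T β(Γ(s,t)) · [ (σ(t) − γ(t)) × (s σ'(t) + (1−s) γ'(t)) ] dt ds, where u × v := u₁v₂ − u₂v₁ for u, v ∈ ℝ². -/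
open MeasureTheory Real

noncomputable section

abbrev R2 : Type := EuclideanSpace ℝ (Fin 2)

def pdR (i : Fin 2) (g : R2 → ℝ) (x : R2) : ℝ := fderiv ℝ g x (EuclideanSpace.single i 1)

/-- the planar curl `∂₁A₂ − ∂₂A₁` -/
def curl (A : R2 → R2) (x : R2) : ℝ := pdR 0 (fun z => A z 1) x - pdR 1 (fun z => A z 0) x

/-- the planar cross product `u₁v₂ − u₂v₁` -/
def cross (u v : R2) : ℝ := u 0 * v 1 - u 1 * v 0

/-- the Euclidean dot product on `ℝ²` -/
def dot (u v : R2) : ℝ := u 0 * v 0 + u 1 * v 1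

/-! The curl term is the antisymmetrised derivative `⟪DA u, v⟫ - ⟪DA v, u⟫`, which makes sense
in any real inner product space. For `G(s,t) = ⟪A(Γ), ∂ₜΓ⟫` and `H(s,t) = ⟪A(Γ), ∂ₛΓ⟫` one has
`∂ₛG - ∂ₜH = ⟪DA ∂ₛΓ, ∂ₜΓ⟫ - ⟪DA ∂ₜΓ, ∂ₛΓ⟫`, since both mixed partials of `Γ` equal `σ' - γ'`.
Integrated over `[0,1] × [0,T]`, the `∂ₛG` term gives the difference of the two line integrals
(Fubini and the fundamental theorem of calculus in `s`), and the `∂ₜH` term vanishes because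
`∂ₛΓ = σ - γ` is zero at `t = 0` and `t = T`. -/

open scoped InnerProductSpace

section LineHomotopy

variable {E : Type*} [NormedAddCommGroup E] [NormedSpace ℝ E]

def lineHomotopy (γ σ : ℝ → E) (s t : ℝ) : E := s • σ t + (1 - s) • γ t

variable {γ σ : ℝ → E}

theorem hasDerivAt_lineHomotopy_param (γ σ : ℝ → E) (s t : ℝ) :
    HasDerivAt (lineHomotopy γ σ · t) (σ t - γ t) s := by
  have h := ((hasDerivAt_id s).smul_const (σ t)).add
    (((hasDerivAt_id s).const_sub 1).smul_const (γ t))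
  exact h.congr_deriv (by simp [sub_eq_add_neg])

theorem hasDerivAt_lineHomotopy_time (s : ℝ) {t : ℝ} (hγ : DifferentiableAt ℝ γ t)
    (hσ : DifferentiableAt ℝ σ t) :
    HasDerivAt (lineHomotopy γ σ s) (lineHomotopy (deriv γ) (deriv σ) s t) t :=
  (hσ.hasDerivAt.const_smul s).add (hγ.hasDerivAt.const_smul (1 - s))

theorem continuous_lineHomotopy (hγ : Continuous γ) (hσ : Continuous σ) :
    Continuous (Function.uncurry (lineHomotopy γ σ)) := by
  unfold lineHomotopy Function.uncurry
  fun_prop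

end LineHomotopy

theorem intervalIntegral_sub_eq_integral_integral_of_hasDerivAt {F : Type*}
    [NormedAddCommGroup F] [NormedSpace ℝ F] [CompleteSpace F] {G G' : ℝ → ℝ → F}
    (hG : ∀ s t, HasDerivAt (G · t) (G' s t) s) (hG' : Continuous (Function.uncurry G'))
    (s₀ s₁ a b : ℝ) :
    ∫ t in a..b, (G s₁ t - G s₀ t) = ∫ s in s₀..s₁, ∫ t in a..b, G' s t := by
  have hFTC : ∀ t, ∫ s in s₀..s₁, G' s t = G s₁ t - G s₀ t := fun t =>
    intervalIntegral.integral_eq_sub_of_hasDerivAt (fun s _ => hG s t)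
      ((hG'.comp (continuous_id.prodMk continuous_const)).intervalIntegrable _ _)
  have hint : IntegrableOn (Function.uncurry G') (Set.uIoc s₀ s₁ ×ˢ Set.uIoc a b) :=
    (hG'.continuousOn.integrableOn_compact (isCompact_uIcc.prod isCompact_uIcc)).mono_set
      (Set.prod_mono Set.uIoc_subset_uIcc Set.uIoc_subset_uIcc)
  simp_rw [← hFTC]
  exact (intervalIntegral_intervalIntegral_swap hint).symm

section Homotopy

variable {E : Type*} [NormedAddCommGroup E] [InnerProductSpace ℝ E] {A : E → E} {γ σ : ℝ → E}

theorem hasDerivAt_inner_lineHomotopy_param (hA : Differentiable ℝ A) (s t : ℝ) :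
    HasDerivAt (fun s => ⟪A (lineHomotopy γ σ s t), lineHomotopy (deriv γ) (deriv σ) s t⟫_ℝ)
      (⟪A (lineHomotopy γ σ s t), deriv σ t - deriv γ t⟫_ℝ +
        ⟪fderiv ℝ A (lineHomotopy γ σ s t) (σ t - γ t),
          lineHomotopy (deriv γ) (deriv σ) s t⟫_ℝ) s :=
  ((hA _).hasFDerivAt.comp_hasDerivAt s (hasDerivAt_lineHomotopy_param γ σ s t)).inner ℝ
    (hasDerivAt_lineHomotopy_param (deriv γ) (deriv σ) s t)

theorem hasDerivAt_inner_lineHomotopy_time (hA : Differentiable ℝ A) (hγ : Differentiable ℝ γ)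
    (hσ : Differentiable ℝ σ) (s t : ℝ) :
    HasDerivAt (fun t => ⟪A (lineHomotopy γ σ s t), σ t - γ t⟫_ℝ)
      (⟪A (lineHomotopy γ σ s t), deriv σ t - deriv γ t⟫_ℝ +
        ⟪fderiv ℝ A (lineHomotopy γ σ s t) (lineHomotopy (deriv γ) (deriv σ) s t),
          σ t - γ t⟫_ℝ) t :=
  ((hA _).hasFDerivAt.comp_hasDerivAt t (hasDerivAt_lineHomotopy_time s (hγ t) (hσ t))).inner
    ℝ ((hσ t).hasDerivAt.sub (hγ t).hasDerivAt)

theorem intervalIntegral_inner_sub_eq_integral_integral_lineHomotopy (hA : ContDiff ℝ 1 A)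
    (hγ : ContDiff ℝ 1 γ) (hσ : ContDiff ℝ 1 σ) {a b : ℝ} (ha : γ a = σ a) (hb : γ b = σ b) :
    (∫ t in a..b, ⟪A (σ t), deriv σ t⟫_ℝ) - ∫ t in a..b, ⟪A (γ t), deriv γ t⟫_ℝ =
      ∫ s in (0:ℝ)..1, ∫ t in a..b,
        (⟪fderiv ℝ A (lineHomotopy γ σ s t) (σ t - γ t),
            lineHomotopy (deriv γ) (deriv σ) s t⟫_ℝ -
          ⟪fderiv ℝ A (lineHomotopy γ σ s t) (lineHomotopy (deriv γ) (deriv σ) s t),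
            σ t - γ t⟫_ℝ) := by
  have hAd : Differentiable ℝ A := hA.differentiable one_ne_zero
  set Γ := lineHomotopy γ σ
  set Γ' := lineHomotopy (deriv γ) (deriv σ)
  set ω : ℝ → ℝ → ℝ := fun s t =>
    ⟪fderiv ℝ A (Γ s t) (σ t - γ t), Γ' s t⟫_ℝ - ⟪fderiv ℝ A (Γ s t) (Γ' s t), σ t - γ t⟫_ℝ
  set H' : ℝ → ℝ → ℝ := fun s t =>
    ⟪A (Γ s t), deriv σ t - deriv γ t⟫_ℝ + ⟪fderiv ℝ A (Γ s t) (Γ' s t), σ t - γ t⟫_ℝ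
  have hΓ : Continuous fun p : ℝ × ℝ => Γ p.1 p.2 :=
    continuous_lineHomotopy hγ.continuous hσ.continuous
  have hΓ' : Continuous fun p : ℝ × ℝ => Γ' p.1 p.2 :=
    continuous_lineHomotopy (hγ.continuous_deriv le_rfl) (hσ.continuous_deriv le_rfl)
  have hAc := hA.continuous
  have hDA := hA.continuous_fderiv one_ne_zero
  have hγc := hγ.continuous
  have hσc := hσ.continuous
  have hγ' := hγ.continuous_deriv le_rfl
  have hσ' := hσ.continuous_deriv le_rfl
  have hω : Continuous (Function.uncurry ω) := by simp only [ω, Function.uncurry_def]; fun_prop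
  have hH' : Continuous (Function.uncurry H') := by simp only [H', Function.uncurry_def]; fun_prop
  have hH'_int (s : ℝ) : ∫ t in a..b, H' s t = 0 := by
    rw [intervalIntegral.integral_eq_sub_of_hasDerivAt
      (fun t _ => hasDerivAt_inner_lineHomotopy_time hAd (hγ.differentiable one_ne_zero)
        (hσ.differentiable one_ne_zero) s t) ((hH'.uncurry_left s).intervalIntegrable _ _), ha, hb]
    simp
  calc (∫ t in a..b, ⟪A (σ t), deriv σ t⟫_ℝ) - ∫ t in a..b, ⟪A (γ t), deriv γ t⟫_ℝ
      = ∫ t in a..b, (⟪A (Γ 1 t), Γ' 1 t⟫_ℝ - ⟪A (Γ 0 t), Γ' 0 t⟫_ℝ) := by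
        rw [← intervalIntegral.integral_sub (Continuous.intervalIntegrable (by fun_prop) a b)
          (Continuous.intervalIntegrable (by fun_prop) a b)]
        simp [Γ, Γ', lineHomotopy]
    _ = ∫ s in (0:ℝ)..1, ∫ t in a..b, (ω s t + H' s t) :=
        intervalIntegral_sub_eq_integral_integral_of_hasDerivAt (G' := fun s t => ω s t + H' s t)
          (fun s t => (hasDerivAt_inner_lineHomotopy_param hAd s t).congr_deriv (by ring))
          (hω.add hH') 0 1 a b
    _ = ∫ s in (0:ℝ)..1, ∫ t in a..b, ω s t := by
        refine intervalIntegral.integral_congr fun s _ => ?_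
        rw [intervalIntegral.integral_add ((hω.uncurry_left s).intervalIntegrable _ _)
          ((hH'.uncurry_left s).intervalIntegrable _ _), hH'_int, add_zero]

end Homotopy

theorem dot_eq_inner (u v : R2) : dot u v = ⟪u, v⟫_ℝ := by
  simp [dot, PiLp.inner_apply, Fin.sum_univ_two, mul_comm]

theorem curl_mul_cross {A : R2 → R2} {x : R2} (hA : DifferentiableAt ℝ A x) (u v : R2) :
    curl A x * cross u v = ⟪fderiv ℝ A x u, v⟫_ℝ - ⟪fderiv ℝ A x v, u⟫_ℝ := by
  have hcoord (i : Fin 2) (w : R2) : fderiv ℝ (fun z => A z i) x w = fderiv ℝ A x w i := by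
    rw [show (fun z => A z i) = EuclideanSpace.proj (𝕜 := ℝ) i ∘ A from rfl,
      ((EuclideanSpace.proj (𝕜 := ℝ) i).hasFDerivAt.comp x hA.hasFDerivAt).fderiv]
    rfl
  have hbasis (w : R2) :
      w = w 0 • EuclideanSpace.single 0 1 + w 1 • EuclideanSpace.single 1 1 := by
    ext i
    fin_cases i <;> simp
  simp only [curl, pdR, cross, hcoord, PiLp.inner_apply, RCLike.inner_apply, conj_trivial,
    Fin.sum_univ_two]
  conv_rhs => rw [hbasis u, hbasis v]
  simp
  ring

theorem greens_theorem_homotopy_general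
    (A : R2 → R2) (hA : ContDiff ℝ 1 A) (T : ℝ)
    (γ σ : ℝ → R2) (hγ : ContDiff ℝ 1 γ) (hσ : ContDiff ℝ 1 σ)
    (h0 : γ 0 = σ 0) (h1 : γ T = σ T) :
    (∫ t in (0:ℝ)..T, dot (A (σ t)) (deriv σ t))
      - (∫ t in (0:ℝ)..T, dot (A (γ t)) (deriv γ t))
      = ∫ s in (0:ℝ)..1, ∫ t in (0:ℝ)..T,
          curl A (s • σ t + (1 - s) • γ t) *
            cross (σ t - γ t) (s • deriv σ t + (1 - s) • deriv γ t) := by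
  simp only [dot_eq_inner]
  rw [intervalIntegral_inner_sub_eq_integral_integral_lineHomotopy hA hγ hσ h0 h1]
  refine intervalIntegral.integral_congr fun s _ => intervalIntegral.integral_congr fun t _ => ?_
  exact (curl_mul_cross ((hA.differentiable one_ne_zero) _) _ _).symm

/-- Green's theorem along the straight-line homotopy
`Γ(s,t) = s σ(t) + (1−s) γ(t)` between two `C¹` paths with common endpoints:
`∫ A(σ)·σ' − ∫ A(γ)·γ' = ∫₀¹∫₀ᵀ β(Γ(s,t)) [(σ−γ) × (sσ' + (1−s)γ')] dt ds`. -/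
theorem greens_theorem_homotopy
    (A : R2 → R2) (hA : ContDiff ℝ 1 A) (T : ℝ) (hT : 0 < T)
    (γ σ : ℝ → R2) (hγ : ContDiff ℝ 1 γ) (hσ : ContDiff ℝ 1 σ)
    (h0 : γ 0 = σ 0) (h1 : γ T = σ T) :
    (∫ t in (0:ℝ)..T, dot (A (σ t)) (deriv σ t))
      - (∫ t in (0:ℝ)..T, dot (A (γ t)) (deriv γ t))
      = ∫ s in (0:ℝ)..1, ∫ t in (0:ℝ)..T,
          curl A (s • σ t + (1 - s) • γ t) *
            cross (σ t - γ t) (s • deriv σ t + (1 - s) • deriv γ t) :=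
  greens_theorem_homotopy_general A hA T γ σ hγ hσ h0 h1
end
end

section
/- Uniformly locally L^p functions lie in the two-dimensional Kato class: let p > 1 and let V : ℝ² → ℝ be a measurable function with M := sup_{x ∈ ℝ²} ( ∫_{B₁(x)} |V(y)|^p dy )^{1/p} < ∞. Then lim_{r → 0⁺} sup_{x ∈ ℝ²} ∫_{B_r(x)} (−log|x − y|) |V(y)| dy = 0; that is, for every ε > 0 there exists r₀ ∈ (0,1) such that for all r ∈ (0,r₀) and all x ∈ ℝ², ∫_{B_r(x)} (−log|x − y|) |V(y)| dy ≤ ε. -/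
/-!
Hölder's inequality on `B_r(x)` with the conjugate exponent `q` bounds the integral by
`‖log |·|‖_{L^q(B_r(0))} · ‖V‖_{L^p(B_1(x))}`: the second factor is at most `M`, and the first
does not depend on `x`. Since `|log t|^q ≤ (2q)^q t^{-1/2}` on `(0, 1]` and `t^{-1/2}` is
integrable near the origin of the plane, `log |·|` lies in `L^q(B_1(0))`, so its `L^q` norm on
`B_r(0)` tends to zero with `r` by absolute continuity of the integral.
-/

open MeasureTheory Real

noncomputable section

open Filter Metric Set Topology
open scoped ENNReal

theorem abs_log_rpow_le_mul_rpow_neg_half {q x : ℝ} (hq : 0 < q) (hx₀ : 0 < x) (hx₁ : x ≤ 1) :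
    |log x| ^ q ≤ (2 * q) ^ q * x ^ (-(1 / 2) : ℝ) := by
  have hx : 0 < x ^ (1 / 2 : ℝ) := rpow_pos_of_pos hx₀ _
  have h := (abs_log_mul_self_rpow_lt x (1 / (2 * q)) hx₀ hx₁ (by positivity)).le
  rw [abs_mul, abs_of_pos (rpow_pos_of_pos hx₀ _), one_div_one_div] at h
  have h' := rpow_le_rpow (by positivity) h hq.le
  rw [mul_rpow (abs_nonneg _) (rpow_nonneg hx₀.le _), ← rpow_mul hx₀.le,
    show 1 / (2 * q) * q = 1 / 2 by field_simp] at h'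
  rw [rpow_neg hx₀.le, ← div_eq_mul_inv, le_div_iff₀ hx]
  exact h'

theorem eLpNorm_ofReal_eq_lintegral_abs_rpow {α : Type*} [MeasurableSpace α] {μ : Measure α}
    (f : α → ℝ) {p : ℝ} (hp : 0 < p) :
    eLpNorm f (ENNReal.ofReal p) μ = (∫⁻ a, ENNReal.ofReal (|f a| ^ p) ∂μ) ^ (1 / p) := by
  rw [eLpNorm_eq_lintegral_rpow_enorm_toReal (by simpa using hp) ENNReal.ofReal_ne_top,
    ENNReal.toReal_ofReal hp.le]
  simp_rw [Real.enorm_eq_ofReal_abs, ENNReal.ofReal_rpow_of_nonneg (abs_nonneg _) hp.le]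

section AddHaar

variable {E F : Type*} [NormedAddCommGroup E] [NormedSpace ℝ E] [FiniteDimensional ℝ E]
  [MeasurableSpace E] [BorelSpace E] [NormedAddCommGroup F] {μ : Measure E} [μ.IsAddHaarMeasure]

theorem eLpNorm_restrict_ball_comp_sub_left {f : E → F} (hf : AEStronglyMeasurable f μ)
    (p : ℝ≥0∞) (x : E) (r : ℝ) :
    eLpNorm (fun y ↦ f (x - y)) p (μ.restrict (ball x r)) =
      eLpNorm f p (μ.restrict (ball 0 r)) := by
  have hpre : (fun y ↦ x - y) ⁻¹' ball 0 r = ball x r := by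
    ext y
    simp [dist_eq_norm, norm_sub_rev]
  have hmp := (Measure.measurePreserving_sub_left μ x).restrict_preimage (s := ball 0 r)
    measurableSet_ball
  rw [hpre] at hmp
  exact eLpNorm_comp_measurePreserving hf.restrict hmp

theorem tendsto_measure_ball_nhdsGT_zero [Nontrivial E] (x : E) :
    Tendsto (fun r ↦ μ (ball x r)) (𝓝[>] 0) (𝓝 0) := by
  have h := tendsto_measure_biInter_gt (μ := μ) (s := ball x) (a := 0)
    (fun r _ ↦ measurableSet_ball.nullMeasurableSet)
    (fun _ _ _ hij ↦ ball_subset_ball hij) ⟨1, one_pos, measure_ball_lt_top.ne⟩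
  rwa [biInter_gt_ball, closedBall_zero, measure_singleton] at h

theorem tendsto_eLpNorm_restrict_ball_nhdsGT_zero [Nontrivial E] {f : E → F} {q : ℝ≥0∞}
    (hq : q ≠ ∞) {R : ℝ} (hR : 0 < R) (hf : MemLp f q (μ.restrict (ball 0 R))) :
    Tendsto (fun r ↦ eLpNorm f q (μ.restrict (ball 0 r))) (𝓝[>] 0) (𝓝 0) := by
  rcases eq_or_ne q 0 with rfl | hq₀
  · simp
  have hfin : ∫⁻ z, ‖f z‖ₑ ^ q.toReal ∂(μ.restrict (ball 0 R)) ≠ ∞ :=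
    ((eLpNorm_lt_top_iff_lintegral_rpow_enorm_lt_top hq₀ hq).1 hf.eLpNorm_lt_top).ne
  have hball : Tendsto (fun r ↦ μ.restrict (ball 0 R) (ball 0 r)) (𝓝[>] 0) (𝓝 0) :=
    tendsto_of_tendsto_of_tendsto_of_le_of_le tendsto_const_nhds
      (tendsto_measure_ball_nhdsGT_zero 0) (fun _ ↦ bot_le)
      (fun _ ↦ Measure.restrict_apply_le _ _)
  have hlim := ((ENNReal.continuous_rpow_const (y := 1 / q.toReal)).tendsto 0).comp
    (tendsto_setLIntegral_zero hfin hball)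
  rw [ENNReal.zero_rpow_of_pos (by simp [ENNReal.toReal_pos hq₀ hq])] at hlim
  refine hlim.congr' (eventually_of_mem (Ioo_mem_nhdsGT hR) fun r hr ↦ ?_)
  dsimp only [Function.comp_apply]
  rw [eLpNorm_eq_lintegral_rpow_enorm_toReal hq₀ hq, Measure.restrict_restrict measurableSet_ball,
    inter_eq_left.2 (ball_subset_ball hr.2.le)]

theorem memLp_log_norm_restrict_ball_one [Nontrivial E] {q : ℝ≥0∞} (hq : q ≠ ∞) :
    MemLp (fun z : E ↦ log ‖z‖) q (μ.restrict (ball 0 1)) := by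
  have hlog : Measurable (fun z : E ↦ log ‖z‖) := measurable_log.comp measurable_norm
  rcases eq_or_ne q 0 with rfl | hq₀
  · exact memLp_zero_iff_aestronglyMeasurable.2 hlog.aestronglyMeasurable
  have hq' : 0 < q.toReal := ENNReal.toReal_pos hq₀ hq
  refine (integrable_norm_rpow_iff hlog.aestronglyMeasurable hq₀ hq).1 <|
    integrableOn_ball_of_norm_le_rpow (C := (2 * q.toReal) ^ q.toReal) Module.finrank_pos
      (α := 1 / 2) ?_ ?_ (hlog.norm.pow_const _).aestronglyMeasurable
  · have : (1 : ℝ) ≤ Module.finrank ℝ E := mod_cast Module.finrank_pos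
    linarith
  refine (ae_restrict_mem measurableSet_ball).mono fun z hz ↦ ?_
  rcases eq_or_ne z 0 with rfl | hz₀
  · simp [zero_rpow hq'.ne']
  rw [mem_ball_zero_iff] at hz
  rw [Real.norm_of_nonneg (by positivity), Real.norm_eq_abs]
  exact abs_log_rpow_le_mul_rpow_neg_half hq' (norm_pos_iff.2 hz₀) hz.le

theorem lintegral_ball_neg_log_mul_abs_le {p q : ℝ} (hpq : p.HolderConjugate q) {V : E → ℝ}
    (hV : AEStronglyMeasurable V μ) (x : E) {r : ℝ} (hr : r ≤ 1) :
    ∫⁻ y in ball x r, ENNReal.ofReal ((-log ‖x - y‖) * |V y|) ∂μ ≤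
      eLpNorm (fun z : E ↦ log ‖z‖) (.ofReal q) (μ.restrict (ball 0 r)) *
        eLpNorm V (.ofReal p) (μ.restrict (ball x r)) := by
  have hlog : AEStronglyMeasurable (fun z : E ↦ log ‖z‖) μ :=
    (measurable_log.comp measurable_norm).aestronglyMeasurable
  have := hpq.symm.ennrealOfReal
  calc ∫⁻ y in ball x r, ENNReal.ofReal ((-log ‖x - y‖) * |V y|) ∂μ
      = eLpNorm ((fun y ↦ log ‖x - y‖) • V) 1 (μ.restrict (ball x r)) := by
        rw [eLpNorm_one_eq_lintegral_enorm]
        refine setLIntegral_congr_fun measurableSet_ball fun y hy ↦ ?_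
        have hxy : ‖x - y‖ ≤ 1 := by
          rw [mem_ball, dist_eq_norm, norm_sub_rev] at hy
          linarith
        rw [Pi.smul_apply', smul_eq_mul, Real.enorm_eq_ofReal_abs, abs_mul,
          abs_of_nonpos (log_nonpos (norm_nonneg _) hxy)]
    _ ≤ eLpNorm (fun y ↦ log ‖x - y‖) (.ofReal q) (μ.restrict (ball x r)) *
          eLpNorm V (.ofReal p) (μ.restrict (ball x r)) :=
        eLpNorm_smul_le_mul_eLpNorm hV.restrict (hlog.comp_measurePreserving
          (Measure.measurePreserving_sub_left μ x)).restrict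
    _ = _ := by rw [eLpNorm_restrict_ball_comp_sub_left hlog]

end AddHaar

/-- Uniformly locally `L^p` functions lie in the two-dimensional Kato
class: if `p > 1` and `sup_x (∫_{B₁(x)} |V|^p)^{1/p} < ∞`, then
`lim_{r→0⁺} sup_x ∫_{B_r(x)} (−log|x−y|)|V(y)| dy = 0`. -/
theorem unifLocLp_subset_Kato
    (p : ℝ) (hp : 1 < p) (V : R2 → ℝ) (hV : Measurable V)
    (hM : ∃ M : ENNReal, M < ⊤ ∧ ∀ x : R2,
      (∫⁻ y in Metric.ball x 1, ENNReal.ofReal (|V y| ^ p)) ^ (1 / p) ≤ M) :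
    ∀ ε : ℝ, 0 < ε → ∃ r₀ : ℝ, 0 < r₀ ∧ r₀ < 1 ∧
      ∀ r : ℝ, 0 < r → r < r₀ → ∀ x : R2,
        (∫⁻ y in Metric.ball x r, ENNReal.ofReal ((-Real.log ‖x - y‖) * |V y|))
          ≤ ENNReal.ofReal ε := by
  obtain ⟨M, hM_top, hM⟩ := hM
  intro ε hε
  have hpq := Real.HolderConjugate.conjExponent hp
  have hkernel : Tendsto (fun r ↦ eLpNorm (fun z : R2 ↦ log ‖z‖) (.ofReal p.conjExponent)
      (volume.restrict (ball 0 r)) * M) (𝓝[>] 0) (𝓝 0) := by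
    simpa using ENNReal.Tendsto.mul_const (tendsto_eLpNorm_restrict_ball_nhdsGT_zero
      ENNReal.ofReal_ne_top one_pos (memLp_log_norm_restrict_ball_one ENNReal.ofReal_ne_top))
      (Or.inr hM_top.ne)
  obtain ⟨r₀, hr₀, hsmall⟩ := (nhdsGT_basis (0 : ℝ)).eventually_iff.1
    (hkernel.eventually (eventually_le_nhds (ENNReal.ofReal_pos.2 hε)))
  refine ⟨min r₀ (1 / 2), by positivity, by norm_num, fun r hr hrr₀ x ↦ ?_⟩
  have hr₁ : r ≤ 1 := by linarith [min_le_right r₀ (1 / 2)]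
  have hVx : eLpNorm V (.ofReal p) (volume.restrict (ball x r)) ≤ M := by
    refine (eLpNorm_mono_measure V (Measure.restrict_mono (ball_subset_ball hr₁) le_rfl)).trans ?_
    rw [eLpNorm_ofReal_eq_lintegral_abs_rpow V (by linarith)]
    exact hM x
  calc _ ≤ eLpNorm (fun z : R2 ↦ log ‖z‖) (.ofReal p.conjExponent) (volume.restrict (ball 0 r)) *
        eLpNorm V (.ofReal p) (volume.restrict (ball x r)) :=
        lintegral_ball_neg_log_mul_abs_le hpq hV.aestronglyMeasurable x hr₁
    _ ≤ _ := by gcongr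
    _ ≤ ENNReal.ofReal ε := hsmall ⟨hr, hrr₀.trans_le (min_le_left _ _)⟩
end
end
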